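/- arXiv:2509.10065 — 4 statements merged into one kernel-verified Lean document; each statement's English description precedes it below -/
import Mathlib

section
/- Let l > 0, ρ₀ > 0, ρ_∞ > 0, e₀ ∈ ℝ, b ∈ ℝ, and let ε > 0 satisfy ε < min{ρ_∞, ρ₀ − |e₀|} (which requires ρ₀ > |e₀|). Define the boundary function ρ(t) = (ρ₀ − ρ_∞)·exp(−l·t) + ρ_∞ and the preset trajectory α(t) = (b/c)·(1 − exp(−c·t))·exp(−l·t) + e₀·exp(−l·t). If c > |b| / (ρ₀ − ε − |e₀|), then |α(t)| < ρ(t) − ε for all t ≥ 0. -/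
/-- Lemma 1 of the paper.
If `ε < min {ρ_∞, ρ₀ - |e₀|}` and `c > |b| / (ρ₀ - ε - |e₀|)`, then the preset
trajectory `α` stays strictly inside the performance envelope shrunk by `ε`. -/
theorem preset_trajectory_within_envelope
    (l ρ₀ ρinf e₀ b c ε : ℝ)
    (hl : 0 < l) (hρ₀ : 0 < ρ₀) (hρinf : 0 < ρinf)
    (hc0 : 0 < c)
    (hε : 0 < ε) (hεlt : ε < min ρinf (ρ₀ - |e₀|))
    (ρ α : ℝ → ℝ)
    (hρ : ∀ t, ρ t = (ρ₀ - ρinf) * Real.exp (-l * t) + ρinf)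
    (hα : ∀ t, α t = (b / c) * (1 - Real.exp (-c * t)) * Real.exp (-l * t)
        + e₀ * Real.exp (-l * t))
    (hc : c > |b| / (ρ₀ - ε - |e₀|)) :
    ∀ t, 0 ≤ t → |α t| < ρ t - ε := by
  have h1 : ε < ρinf := lt_of_lt_of_le hεlt (min_le_left _ _)
  have h2 : ε < ρ₀ - |e₀| := lt_of_lt_of_le hεlt (min_le_right _ _)
  have hd : 0 < ρ₀ - ε - |e₀| := by linarith
  have hbd : |b| < c * (ρ₀ - ε - |e₀|) := by
    have := (div_lt_iff₀ hd).mp hc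
    linarith
  intro t ht
  rw [hα, hρ]
  set E := Real.exp (-l * t) with hE
  set F := Real.exp (-c * t) with hF
  have hE0 : 0 < E := Real.exp_pos _
  have hE1 : E ≤ 1 := Real.exp_le_one_iff.mpr (by nlinarith)
  have hF0 : 0 < F := Real.exp_pos _
  have hF1 : F ≤ 1 := Real.exp_le_one_iff.mpr (by nlinarith)
  have habs : |(b / c) * (1 - F) * E + e₀ * E| ≤ (|b| / c) * (1 - F) * E + |e₀| * E := by
    calc |(b / c) * (1 - F) * E + e₀ * E|
        ≤ |(b / c) * (1 - F) * E| + |e₀ * E| := abs_add_le _ _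
      _ = (|b| / c) * (1 - F) * E + |e₀| * E := by
          rw [abs_mul, abs_mul, abs_mul, abs_div, abs_of_pos hc0,
            abs_of_pos hE0, abs_of_nonneg (by linarith : (0:ℝ) ≤ 1 - F)]
  have hbc : |b| / c < ρ₀ - ε - |e₀| := (div_lt_iff₀ hc0).mpr (by linarith)
  have hbc0 : 0 ≤ |b| / c := div_nonneg (abs_nonneg _) hc0.le
  have step : (|b| / c) * (1 - F) * E + |e₀| * E < (ρ₀ - ε) * E := by
    have h1F : (|b| / c) * (1 - F) ≤ |b| / c := by nlinarith
    nlinarith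
  have final : (ρ₀ - ε) * E ≤ (ρ₀ - ρinf) * E + ρinf - ε := by nlinarith
  linarith [lt_of_le_of_lt habs step]
end

section
/- Let l > 0, ρ₀ > 0, ρ_∞ > 0, e₀ ∈ ℝ, b ∈ ℝ, c > 0, ε ∈ ℝ. Define ρ(t) = (ρ₀ − ρ_∞)·exp(−l·t) + ρ_∞, α(t) = (b/c)·(1 − exp(−c·t))·exp(−l·t) + e₀·exp(−l·t), and γ(t) = ρ(t) − ε − |α(t)|. Then for all t ≥ 0, γ(t) ≥ [ρ₀ − ε − |e₀| − (|b|/c)·(1 − exp(−c·t))]·exp(−l·t) + (ρ_∞ − ε)·(1 − exp(−l·t)). Moreover, if ρ₀ − ε − |e₀| − |b|/c > 0 and ρ_∞ > ε, then γ(t) > 0 for all t ≥ 0. -/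
lemma gamma_key (l ρ₀ ρinf e₀ b c ε : ℝ)
    (hc : 0 < c)
    (ρ α γ : ℝ → ℝ)
    (hρ : ∀ t, ρ t = (ρ₀ - ρinf) * Real.exp (-l * t) + ρinf)
    (hα : ∀ t, α t = (b / c) * (1 - Real.exp (-c * t)) * Real.exp (-l * t)
        + e₀ * Real.exp (-l * t))
    (hγ : ∀ t, γ t = ρ t - ε - |α t|) :
    ∀ t, 0 ≤ t →
      γ t ≥ (ρ₀ - ε - |e₀| - (|b| / c) * (1 - Real.exp (-c * t))) * Real.exp (-l * t)
            + (ρinf - ε) * (1 - Real.exp (-l * t)) := by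
  intro t ht
  have hEl : 0 < Real.exp (-l * t) := Real.exp_pos _
  have hEc : Real.exp (-c * t) ≤ 1 := by
    rw [show (1:ℝ) = Real.exp 0 by simp]
    exact Real.exp_le_exp.mpr (by nlinarith)
  have habs : |α t| ≤ (|b| / c) * (1 - Real.exp (-c * t)) * Real.exp (-l * t)
      + |e₀| * Real.exp (-l * t) := by
    rw [hα]
    calc |(b / c) * (1 - Real.exp (-c * t)) * Real.exp (-l * t) + e₀ * Real.exp (-l * t)|
        ≤ |(b / c) * (1 - Real.exp (-c * t)) * Real.exp (-l * t)| + |e₀ * Real.exp (-l * t)| :=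
          abs_add_le _ _
      _ = (|b| / c) * (1 - Real.exp (-c * t)) * Real.exp (-l * t)
            + |e₀| * Real.exp (-l * t) := by
          rw [abs_mul, abs_mul, abs_mul, abs_div, abs_of_pos hc,
            abs_of_nonneg (by linarith : (0:ℝ) ≤ 1 - Real.exp (-c * t)),
            abs_of_pos hEl]
  rw [hγ, hρ]
  nlinarith [habs]

/-- the key inequality `(7)` in the proof of Lemma 1, plus the
resulting positivity of `γ(t) = ρ(t) - ε - |α(t)|`. -/
theorem gamma_lower_bound_and_pos
    (l ρ₀ ρinf e₀ b c ε : ℝ)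
    (hl : 0 < l) (hρ₀ : 0 < ρ₀) (hρinf : 0 < ρinf) (hc : 0 < c)
    (ρ α γ : ℝ → ℝ)
    (hρ : ∀ t, ρ t = (ρ₀ - ρinf) * Real.exp (-l * t) + ρinf)
    (hα : ∀ t, α t = (b / c) * (1 - Real.exp (-c * t)) * Real.exp (-l * t)
        + e₀ * Real.exp (-l * t))
    (hγ : ∀ t, γ t = ρ t - ε - |α t|) :
    (∀ t, 0 ≤ t →
      γ t ≥ (ρ₀ - ε - |e₀| - (|b| / c) * (1 - Real.exp (-c * t))) * Real.exp (-l * t)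
            + (ρinf - ε) * (1 - Real.exp (-l * t)))
    ∧ ((0 < ρ₀ - ε - |e₀| - |b| / c ∧ ε < ρinf) → ∀ t, 0 ≤ t → 0 < γ t) := by
  have key := gamma_key l ρ₀ ρinf e₀ b c ε hc ρ α γ hρ hα hγ
  refine ⟨key, ?_⟩
  rintro ⟨h1, h2⟩ t ht
  have hEl : 0 < Real.exp (-l * t) := Real.exp_pos _
  have hEl1 : Real.exp (-l * t) ≤ 1 := by
    rw [show (1:ℝ) = Real.exp 0 by simp]
    exact Real.exp_le_exp.mpr (by nlinarith)
  have hEc0 : 0 < Real.exp (-c * t) := Real.exp_pos _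
  have hEc1 : Real.exp (-c * t) ≤ 1 := by
    rw [show (1:ℝ) = Real.exp 0 by simp]
    exact Real.exp_le_exp.mpr (by nlinarith)
  have hbc : 0 ≤ |b| / c := div_nonneg (abs_nonneg _) hc.le
  have hk := key t ht
  nlinarith [hk, mul_nonneg hbc hEc0.le, mul_pos (show (0:ℝ) < ρ₀ - ε - |e₀| - |b| / c from h1) hEl]
end

section
/- Let l > 0, ρ₀ > 0, ρ_∞ > 0, e₀ ∈ ℝ, b ∈ ℝ, and let δ_z > 0 satisfy δ_z < min{ρ_∞, ρ₀ − |e₀|}. Define ρ(t) = (ρ₀ − ρ_∞)·exp(−l·t) + ρ_∞ and α(t) = (b/c)·(1 − exp(−c·t))·exp(−l·t) + e₀·exp(−l·t), and suppose c > |b|/(ρ₀ − δ_z − |e₀|). If e : [0, ∞) → ℝ satisfies |e(t) − α(t)| ≤ δ_z for all t ≥ 0, then |e(t)| < ρ(t) for all t ≥ 0. -/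
/-- if the actual tracking error `e` stays within `δ_z` of
the preset trajectory `α`, and the parameters satisfy the conditions of
Lemma 1 with `ε = δ_z`, then `|e(t)| < ρ(t)` for all `t ≥ 0`. -/
theorem tracking_error_within_envelope
    (l ρ₀ ρinf e₀ b c δz : ℝ)
    (hl : 0 < l) (hρ₀ : 0 < ρ₀) (hρinf : 0 < ρinf) (hc0 : 0 < c)
    (hδz : 0 < δz) (hδzlt : δz < min ρinf (ρ₀ - |e₀|))
    (hc : c > |b| / (ρ₀ - δz - |e₀|))
    (ρ α : ℝ → ℝ)
    (hρ : ∀ t, ρ t = (ρ₀ - ρinf) * Real.exp (-l * t) + ρinf)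
    (hα : ∀ t, α t = (b / c) * (1 - Real.exp (-c * t)) * Real.exp (-l * t)
        + e₀ * Real.exp (-l * t))
    (e : ℝ → ℝ)
    (he : ∀ t, 0 ≤ t → |e t - α t| ≤ δz) :
    ∀ t, 0 ≤ t → |e t| < ρ t := by
  intro t ht
  have hδρinf : δz < ρinf := lt_of_lt_of_le hδzlt (min_le_left _ _)
  have hδρ₀ : δz < ρ₀ - |e₀| := lt_of_lt_of_le hδzlt (min_le_right _ _)
  have hd : 0 < ρ₀ - δz - |e₀| := by linarith
  have hbc : |b| / c < ρ₀ - δz - |e₀| := by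
    rw [div_lt_iff₀ hc0]
    have := (div_lt_iff₀ hd).mp hc
    nlinarith
  set E := Real.exp (-l * t) with hE
  have hE0 : 0 < E := Real.exp_pos _
  have hE1 : E ≤ 1 := Real.exp_le_one_iff.mpr (by nlinarith)
  have hEc0 : 0 < Real.exp (-c * t) := Real.exp_pos _
  have hEc1 : Real.exp (-c * t) ≤ 1 := Real.exp_le_one_iff.mpr (by nlinarith)
  have hαbound : |α t| ≤ (|b| / c + |e₀|) * E := by
    rw [hα t]
    calc |b / c * (1 - Real.exp (-c * t)) * E + e₀ * E|
        ≤ |b / c * (1 - Real.exp (-c * t)) * E| + |e₀ * E| := abs_add_le _ _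
      _ = |b| / c * |1 - Real.exp (-c * t)| * E + |e₀| * E := by
          rw [abs_mul, abs_mul, abs_mul, abs_div, abs_of_pos hc0,
            abs_of_pos hE0]
      _ ≤ |b| / c * 1 * E + |e₀| * E := by
          have h1 : |1 - Real.exp (-c * t)| ≤ 1 := by
            rw [abs_le]; constructor <;> nlinarith
          have hb0 : 0 ≤ |b| / c := div_nonneg (abs_nonneg _) hc0.le
          nlinarith [mul_le_mul_of_nonneg_right (mul_le_mul_of_nonneg_left h1 hb0) hE0.le]
      _ = (|b| / c + |e₀|) * E := by ring
  have h1 : |e t| ≤ δz + (|b| / c + |e₀|) * E := by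
    calc |e t| ≤ |e t - α t| + |α t| := by
          have := abs_sub_abs_le_abs_sub (e t) (α t); linarith [abs_nonneg (α t)]
      _ ≤ δz + (|b| / c + |e₀|) * E := add_le_add (he t ht) hαbound
  have h2 : (|b| / c + |e₀|) * E < (ρ₀ - δz) * E := by nlinarith
  rw [hρ t]
  nlinarith
end

section
/- Let Λ and K be 3×3 real diagonal matrices with positive diagonal entries; write λ_min(Λ), λ_max(Λ) for the minimum and maximum diagonal entries of Λ and λ_min(K) for the minimum diagonal entry of K. Let Δ : [0, ∞) → ℝ³ be continuous with Euclidean norm ‖Δ(t)‖ ≤ δ_E for all t ≥ 0, and define δ_z = (λ_min(Λ) + λ_max(Λ))·δ_E/(λ_min(Λ)·λ_min(K)). Let l > 0, and for each component index ν ∈ {1,2,3} let ρ_{ν,0} > 0, ρ_{ν,∞} > 0, e_ν(0) ∈ ℝ, b_ν ∈ ℝ, and c_ν > 0 satisfy δ_z < min{ρ_{ν,∞}, ρ_{ν,0} − |e_ν(0)|} and c_ν > |b_ν|/(ρ_{ν,0} − δ_z − |e_ν(0)|). Define ρ_ν(t) = (ρ_{ν,0} − ρ_{ν,∞})·exp(−l·t)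 + ρ_{ν,∞} and α_ν(t) = (b_ν/c_ν)·(1 − exp(−c_ν·t))·exp(−l·t) + e_ν(0)·exp(−l·t). Let e : [0, ∞) → ℝ³ be continuous with component ν at time 0 equal to e_ν(0), let z(t) = e(t) − α(t), let z_∫(t) = ∫₀ᵗ z(τ) dτ, and let s(t) = z(t) + Λ·z_∫(t). Assume s is differentiable with s'(t) = −K·s(t) + Δ(t) for all t ≥ 0. Then for each ν ∈ {1,2,3} and all t ≥ 0, |e_ν(t)| < ρ_ν(t). -/
/-!
Work componentwise: since `K` and `Λ` are diagonal, each coordinate of the sliding variable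
solves the scalar equation `σ' = -k σ + g` with `σ(0) = 0` and `|g| ≤ δ_E`, and the integrating
factor `exp (k t)` together with a comparison argument gives `|σ| ≤ δ_E / k`. The integral
`ζ` of the error `z` solves `ζ' = -λ ζ + σ`, `ζ(0) = 0`, so the same bound gives
`|λ ζ| ≤ sup |σ|`, whence `|z| = |σ - λ ζ| ≤ 2 δ_E / λ_min(K) ≤ δ_z`. Finally the preset
trajectory satisfies `|α(t)| < (ρ₀ - δ_z) exp (-l t)` by the choice of `c`, and
`δ_z + (ρ₀ - δ_z) exp (-l t) ≤ ρ(t)` because `δ_z < ρ_∞`.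
-/

open Set Topology Real

theorem Matrix.IsDiag.mulVec_apply {n R : Type*} [Fintype n] [NonUnitalNonAssocSemiring R]
    {A : Matrix n n R} (hA : A.IsDiag) (v : n → R) (i : n) :
    A.mulVec v i = A i i * v i := by
  classical
  conv_lhs => rw [← hA.diagonal_diag, Matrix.mulVec_diagonal]
  rfl

theorem abs_le_of_hasDerivWithinAt_neg_mul_add {f g : ℝ → ℝ} {a b k C : ℝ} (hk : 0 < k)
    (hf : ContinuousOn f (Icc a b))
    (hf' : ∀ t ∈ Ico a b, HasDerivWithinAt f (-k * f t + g t) (Ici t) t)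
    (hfa : f a = 0) (hg : ∀ t ∈ Ico a b, |g t| ≤ C) :
    ∀ t ∈ Icc a b, |f t| ≤ C / k * (1 - exp (-(k * (t - a)))) := by
  have hw : ∀ t, HasDerivAt (fun τ => exp (k * (τ - a))) (exp (k * (t - a)) * k) t := fun t => by
    simpa using ((hasDerivAt_id t).sub_const a).const_mul k |>.exp
  -- `exp (k (t - a)) f t` has derivative `exp (k (t - a)) g t`, which is dominated by the
  -- derivative of the barrier `C / k (exp (k (t - a)) - 1)`.
  have hbound := image_norm_le_of_norm_deriv_right_le_deriv_boundary
    (f := fun τ => exp (k * (τ - a)) * f τ) (f' := fun τ => exp (k * (τ - a)) * g τ)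
    (B := fun τ => C / k * (exp (k * (τ - a)) - 1)) (B' := fun τ => C * exp (k * (τ - a)))
    ((continuous_exp.comp (by fun_prop)).continuousOn.mul hf)
    (fun t ht => ((hw t).hasDerivWithinAt.mul (hf' t ht)).congr_deriv (by ring))
    (by simp [hfa])
    (fun t => (((hw t).sub_const 1).const_mul (C / k)).congr_deriv (by field_simp))
    (fun t ht => by
      rw [Real.norm_eq_abs, abs_mul, abs_of_pos (exp_pos _), mul_comm C]
      exact mul_le_mul_of_nonneg_left (hg t ht) (exp_pos _).le)
  intro t ht
  have h := hbound ht
  rw [Real.norm_eq_abs, abs_mul, abs_of_pos (exp_pos _)] at h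
  rw [exp_neg, ← mul_le_mul_iff_right₀ (exp_pos (k * (t - a)))]
  calc exp (k * (t - a)) * |f t| ≤ C / k * (exp (k * (t - a)) - 1) := h
    _ = _ := by field_simp

theorem abs_le_two_mul_of_abs_add_mul_integral_le {z : ℝ → ℝ} {a b c S : ℝ} (hc : 0 < c)
    (hz : ContinuousOn z (Icc a b))
    (hσ : ∀ t ∈ Icc a b, |z t + c * ∫ τ in a..t, z τ| ≤ S) :
    ∀ t ∈ Icc a b, |z t| ≤ 2 * S := by
  set F : ℝ → ℝ := fun t => ∫ τ in a..t, z τ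
  have hF_cont : ContinuousOn F (Icc a b) := by
    intro t ht
    have hab : a ≤ b := ht.1.trans ht.2
    simpa only [uIcc_of_le hab] using
      intervalIntegral.continuousOn_primitive_interval (a := a) (b := b)
        (by simpa only [uIcc_of_le hab] using hz.integrableOn_Icc) t
        (by simpa only [uIcc_of_le hab] using ht)
  have hF_deriv : ∀ t ∈ Ico a b, HasDerivWithinAt F (-c * F t + (z t + c * F t)) (Ici t) t := by
    intro t ht
    have hIcc : Icc a b ∈ 𝓝[>] t := Icc_mem_nhdsGT_of_mem ht
    refine (intervalIntegral.integral_hasDerivWithinAt_right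
      (hz.mono ?_).intervalIntegrable
      ((hz.stronglyMeasurableAtFilter_nhdsWithin measurableSet_Icc t).filter_mono
        (nhdsWithin_le_of_mem hIcc))
      ((hz t (Ico_subset_Icc_self ht)).mono_of_mem_nhdsWithin hIcc)).congr_deriv (by ring)
    rw [uIcc_of_le ht.1]
    exact Icc_subset_Icc_right ht.2.le
  intro t ht
  have hS : 0 ≤ S := (abs_nonneg _).trans (hσ t ht)
  have hF_le : c * |F t| ≤ S := by
    have h := abs_le_of_hasDerivWithinAt_neg_mul_add hc hF_cont hF_deriv
      intervalIntegral.integral_same (fun τ hτ => hσ τ (Ico_subset_Icc_self hτ)) t ht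
    calc c * |F t| ≤ c * (S / c) :=
          mul_le_mul_of_nonneg_left (h.trans (mul_le_of_le_one_right (by positivity)
            (sub_le_self _ (exp_pos _).le))) hc.le
      _ = S := by field_simp
  calc |z t| = |(z t + c * F t) - c * F t| := by ring_nf
    _ ≤ |z t + c * F t| + |c * F t| := abs_sub _ _
    _ ≤ S + S := by
        rw [abs_mul, abs_of_pos hc]
        exact add_le_add (hσ t ht) hF_le
    _ = 2 * S := by ring

section EuclideanSpace

variable {ι : Type*} [Fintype ι]

theorem HasDerivAt.euclideanSpace_apply {f : ℝ → EuclideanSpace ℝ ι}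
    {f' : EuclideanSpace ℝ ι} {t : ℝ} (h : HasDerivAt f f' t) (i : ι) :
    HasDerivAt (fun τ => f τ i) (f' i) t :=
  (EuclideanSpace.proj i : EuclideanSpace ℝ ι →L[ℝ] ℝ).hasFDerivAt.comp_hasDerivAt t h

theorem EuclideanSpace.intervalIntegral_apply {f : ℝ → EuclideanSpace ℝ ι} {a b : ℝ}
    (hf : IntervalIntegrable f MeasureTheory.volume a b) (i : ι) :
    (∫ τ in a..b, f τ) i = ∫ τ in a..b, f τ i :=
  ((EuclideanSpace.proj i : EuclideanSpace ℝ ι →L[ℝ] ℝ).intervalIntegral_comp_comm hf).symm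

theorem abs_apply_le_of_hasDerivAt_neg_mulVec_add {K : Matrix ι ι ℝ} (hK : K.IsDiag) {i : ι}
    (hKi : 0 < K i i) {s Δ : ℝ → EuclideanSpace ℝ ι} {δ : ℝ} (hs0 : s 0 i = 0)
    (hΔ : ∀ t, 0 ≤ t → ‖Δ t‖ ≤ δ)
    (hs : ∀ t, 0 ≤ t → HasDerivAt s (-WithLp.toLp 2 (K.mulVec (s t)) + Δ t) t) :
    ∀ t, 0 ≤ t → |s t i| ≤ δ / K i i := by
  have hsi : ∀ t, 0 ≤ t → HasDerivAt (fun τ => s τ i) (-K i i * s t i + Δ t i) t := by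
    intro t ht
    refine ((hs t ht).euclideanSpace_apply i).congr_deriv ?_
    rw [neg_mul, ← hK.mulVec_apply]
    rfl
  intro t ht
  have hδ : 0 ≤ δ := (norm_nonneg _).trans (hΔ 0 le_rfl)
  calc |s t i| ≤ δ / K i i * (1 - exp (-(K i i * (t - 0)))) :=
        abs_le_of_hasDerivWithinAt_neg_mul_add hKi
          (fun τ hτ => (hsi τ hτ.1).continuousAt.continuousWithinAt)
          (fun τ hτ => (hsi τ hτ.1).hasDerivWithinAt) hs0
          (fun τ hτ => (Real.norm_eq_abs _ ▸ PiLp.norm_apply_le (Δ τ) i).trans (hΔ τ hτ.1))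
          t ⟨ht, le_rfl⟩
    _ ≤ δ / K i i := mul_le_of_le_one_right (div_nonneg hδ hKi.le) (sub_le_self _ (exp_pos _).le)

theorem abs_apply_le_two_mul_of_sliding_mode {Λ K : Matrix ι ι ℝ} (hΛ : Λ.IsDiag)
    (hK : K.IsDiag) {i : ι} (hΛi : 0 < Λ i i) (hKi : 0 < K i i) {z s Δ : ℝ → EuclideanSpace ℝ ι}
    {δ : ℝ} (hz : ContinuousOn z (Ici 0)) (hz0 : z 0 i = 0)
    (hs : ∀ t, s t = z t + WithLp.toLp 2 (Λ.mulVec (∫ τ in (0:ℝ)..t, z τ : EuclideanSpace ℝ ι)))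
    (hΔ : ∀ t, 0 ≤ t → ‖Δ t‖ ≤ δ)
    (hode : ∀ t, 0 ≤ t → HasDerivAt s (-WithLp.toLp 2 (K.mulVec (s t)) + Δ t) t) :
    ∀ t, 0 ≤ t → |z t i| ≤ 2 * (δ / K i i) := by
  have hs_apply : ∀ t, 0 ≤ t → s t i = z t i + Λ i i * ∫ τ in (0:ℝ)..t, z τ i := by
    intro t ht
    have hzi : IntervalIntegrable z MeasureTheory.volume 0 t :=
      (hz.mono (by rw [uIcc_of_le ht]; exact Icc_subset_Ici_self)).intervalIntegrable
    rw [hs, ← EuclideanSpace.intervalIntegral_apply hzi, ← hΛ.mulVec_apply]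
    rfl
  have hs0 : s 0 i = 0 := by simp [hs_apply 0 le_rfl, hz0]
  intro t ht
  exact abs_le_two_mul_of_abs_add_mul_integral_le hΛi
    (((PiLp.continuous_apply 2 _ i).comp_continuousOn hz).mono Icc_subset_Ici_self)
    (fun τ hτ => hs_apply τ hτ.1 ▸
      abs_apply_le_of_hasDerivAt_neg_mulVec_add hK hKi hs0 hΔ hode τ hτ.1)
    t ⟨ht, le_rfl⟩

end EuclideanSpace

theorem abs_preset_lt {l b c e₀ D t : ℝ} (hc : 0 < c) (ht : 0 ≤ t) (hD : |b| / c + |e₀| < D) :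
    |b / c * (1 - exp (-c * t)) * exp (-l * t) + e₀ * exp (-l * t)| < D * exp (-l * t) := by
  have hE : exp (-c * t) ≤ 1 := exp_le_one_iff.mpr (by nlinarith)
  calc |b / c * (1 - exp (-c * t)) * exp (-l * t) + e₀ * exp (-l * t)|
      = |b / c * (1 - exp (-c * t)) + e₀| * exp (-l * t) := by
        rw [← add_mul, abs_mul, abs_of_pos (exp_pos _)]
    _ ≤ (|b| / c + |e₀|) * exp (-l * t) := by
        gcongr
        calc |b / c * (1 - exp (-c * t)) + e₀| ≤ |b / c * (1 - exp (-c * t))| + |e₀| :=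
              abs_add_le _ _
          _ = |b| / c * (1 - exp (-c * t)) + |e₀| := by
              rw [abs_mul, abs_div, abs_of_pos hc, abs_of_nonneg (sub_nonneg.mpr hE)]
          _ ≤ |b| / c + |e₀| := by
              gcongr
              exact mul_le_of_le_one_right (by positivity) (sub_le_self _ (exp_pos _).le)
    _ < D * exp (-l * t) := by gcongr

theorem abs_lt_envelope_of_abs_sub_preset_le {l ρ₀ ρinf e₀ b c δ x t : ℝ} (hl : 0 < l)
    (hc : 0 < c) (ht : 0 ≤ t) (hδ : δ < min ρinf (ρ₀ - |e₀|)) (hcb : c > |b| / (ρ₀ - δ - |e₀|))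
    (hx : |x - (b / c * (1 - exp (-c * t)) * exp (-l * t) + e₀ * exp (-l * t))| ≤ δ) :
    |x| < (ρ₀ - ρinf) * exp (-l * t) + ρinf := by
  obtain ⟨hδρinf, hδρ₀⟩ := lt_min_iff.mp hδ
  have hbc : |b| / c + |e₀| < ρ₀ - δ := by
    have := (div_lt_comm₀ (by linarith) hc).mp hcb
    linarith
  have hα := abs_preset_lt (l := l) hc ht hbc
  have hE : exp (-l * t) ≤ 1 := exp_le_one_iff.mpr (by nlinarith)
  have := abs_sub_abs_le_abs_sub x (b / c * (1 - exp (-c * t)) * exp (-l * t) + e₀ * exp (-l * t))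
  nlinarith [mul_le_mul_of_nonneg_left hE (by linarith : 0 ≤ ρinf - δ)]

theorem two_mul_div_le_add_mul_div_mul {m M k δ : ℝ} (hm : 0 < m) (hmM : m ≤ M) (hk : 0 < k)
    (hδ : 0 ≤ δ) : 2 * (δ / k) ≤ (m + M) * δ / (m * k) := by
  rw [← mul_div_assoc, div_le_div_iff₀ hk (mul_pos hm hk)]
  nlinarith [mul_nonneg (mul_nonneg hδ hk.le) (sub_nonneg.2 hmM)]

theorem main_theorem_tracking_error_in_envelope_general
    (Λ K : Matrix (Fin 3) (Fin 3) ℝ)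
    (hΛdiag : Λ.IsDiag) (hKdiag : K.IsDiag)
    (hΛpos : ∀ i, 0 < Λ i i) (hKpos : ∀ i, 0 < K i i)
    (lamMinΛ lamMaxΛ lamMinK : ℝ)
    (hminΛ : lamMinΛ = Finset.univ.inf' Finset.univ_nonempty (fun i => Λ i i))
    (hmaxΛ : lamMaxΛ = Finset.univ.sup' Finset.univ_nonempty (fun i => Λ i i))
    (hminK : lamMinK = Finset.univ.inf' Finset.univ_nonempty (fun i => K i i))
    (δE : ℝ)
    (Δ : ℝ → EuclideanSpace ℝ (Fin 3))
    (hΔbound : ∀ t, 0 ≤ t → ‖Δ t‖ ≤ δE)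
    (δz : ℝ)
    (hδz : δz = (lamMinΛ + lamMaxΛ) * δE / (lamMinΛ * lamMinK))
    (l : ℝ) (hl : 0 < l)
    (ρ₀ ρinf e₀ b c : Fin 3 → ℝ)
    (hcpos : ∀ ν, 0 < c ν)
    (hδzlt : ∀ ν, δz < min (ρinf ν) (ρ₀ ν - |e₀ ν|))
    (hc : ∀ ν, c ν > |b ν| / (ρ₀ ν - δz - |e₀ ν|))
    (ρ α : Fin 3 → ℝ → ℝ)
    (hρ : ∀ ν t, ρ ν t = (ρ₀ ν - ρinf ν) * Real.exp (-l * t) + ρinf ν)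
    (hα : ∀ ν t, α ν t =
      (b ν / c ν) * (1 - Real.exp (-(c ν) * t)) * Real.exp (-l * t)
        + e₀ ν * Real.exp (-l * t))
    (e z zint s : ℝ → EuclideanSpace ℝ (Fin 3))
    (hecont : ContinuousOn e (Set.Ici 0))
    (he0 : ∀ ν, e 0 ν = e₀ ν)
    (hz : ∀ t ν, z t ν = e t ν - α ν t)
    (hzint : ∀ t, zint t = ∫ τ in (0:ℝ)..t, z τ)
    (hs : ∀ t, s t = z t + (show EuclideanSpace ℝ (Fin 3) from WithLp.toLp 2 (Λ.mulVec (zint t))))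
    (hode : ∀ t, 0 ≤ t →
      HasDerivAt s (-(show EuclideanSpace ℝ (Fin 3) from WithLp.toLp 2 (K.mulVec (s t))) + Δ t) t) :
    ∀ ν : Fin 3, ∀ t, 0 ≤ t → |e t ν| < ρ ν t := by
  intro ν t ht
  have hδE : 0 ≤ δE := (norm_nonneg _).trans (hΔbound 0 le_rfl)
  have hminK_pos : 0 < lamMinK := hminK ▸ (Finset.lt_inf'_iff _).2 fun i _ => hKpos i
  have hminK_le : lamMinK ≤ K ν ν := hminK ▸ Finset.inf'_le _ (Finset.mem_univ ν)
  have hminΛ_pos : 0 < lamMinΛ := hminΛ ▸ (Finset.lt_inf'_iff _).2 fun i _ => hΛpos i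
  have hminΛ_le_max : lamMinΛ ≤ lamMaxΛ := hminΛ ▸ hmaxΛ ▸
    (Finset.inf'_le _ (Finset.mem_univ ν)).trans
      (Finset.le_sup' (fun i => Λ i i) (Finset.mem_univ ν))
  have hz_cont : ContinuousOn z (Ici 0) := by
    have hz_eq : z = fun τ => e τ - WithLp.toLp 2 (fun i => α i τ) := by
      ext τ i; exact hz τ i
    rw [hz_eq]
    refine hecont.sub ((PiLp.continuous_toLp 2 _).comp (continuous_pi fun i => ?_)).continuousOn
    simp only [hα]
    fun_prop
  have hz0 : z 0 ν = 0 := by simp [hz, he0, hα]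
  have hz_bound : |z t ν| ≤ δz :=
    calc |z t ν| ≤ 2 * (δE / K ν ν) := abs_apply_le_two_mul_of_sliding_mode hΛdiag hKdiag
          (hΛpos ν) (hKpos ν) hz_cont hz0 (fun t => hzint t ▸ hs t) hΔbound hode t ht
      _ ≤ 2 * (δE / lamMinK) := by gcongr
      _ ≤ δz := hδz ▸ two_mul_div_le_add_mul_div_mul hminΛ_pos hminΛ_le_max hminK_pos hδE
  rw [hρ]
  refine abs_lt_envelope_of_abs_sub_preset_le hl (hcpos ν) ht (hδzlt ν) (hc ν) ?_
  rw [← hα, ← hz]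
  exact hz_bound

/-- Theorem 1 of the paper, main result.
Under the closed-loop sliding-mode dynamics `s' = -K·s + Δ` with bounded
disturbance `‖Δ‖ ≤ δ_E`, positive diagonal matrices `Λ` and `K`, and envelope /
preset-trajectory parameters satisfying the conditions of Lemma 1 with
`δ_z = (λ_min(Λ) + λ_max(Λ))·δ_E/(λ_min(Λ)·λ_min(K))`, each component of the
tracking error stays strictly inside the performance envelope:
`|e_ν(t)| < ρ_ν(t)` for all `t ≥ 0`. -/
theorem main_theorem_tracking_error_in_envelope
    (Λ K : Matrix (Fin 3) (Fin 3) ℝ)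
    (hΛdiag : Λ.IsDiag) (hKdiag : K.IsDiag)
    (hΛpos : ∀ i, 0 < Λ i i) (hKpos : ∀ i, 0 < K i i)
    (lamMinΛ lamMaxΛ lamMinK : ℝ)
    (hminΛ : lamMinΛ = Finset.univ.inf' Finset.univ_nonempty (fun i => Λ i i))
    (hmaxΛ : lamMaxΛ = Finset.univ.sup' Finset.univ_nonempty (fun i => Λ i i))
    (hminK : lamMinK = Finset.univ.inf' Finset.univ_nonempty (fun i => K i i))
    (δE : ℝ)
    (Δ : ℝ → EuclideanSpace ℝ (Fin 3))
    (hΔcont : ContinuousOn Δ (Set.Ici 0))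
    (hΔbound : ∀ t, 0 ≤ t → ‖Δ t‖ ≤ δE)
    (δz : ℝ)
    (hδz : δz = (lamMinΛ + lamMaxΛ) * δE / (lamMinΛ * lamMinK))
    (l : ℝ) (hl : 0 < l)
    (ρ₀ ρinf e₀ b c : Fin 3 → ℝ)
    (hρ₀ : ∀ ν, 0 < ρ₀ ν) (hρinf : ∀ ν, 0 < ρinf ν) (hcpos : ∀ ν, 0 < c ν)
    (hδzlt : ∀ ν, δz < min (ρinf ν) (ρ₀ ν - |e₀ ν|))
    (hc : ∀ ν, c ν > |b ν| / (ρ₀ ν - δz - |e₀ ν|))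
    (ρ α : Fin 3 → ℝ → ℝ)
    (hρ : ∀ ν t, ρ ν t = (ρ₀ ν - ρinf ν) * Real.exp (-l * t) + ρinf ν)
    (hα : ∀ ν t, α ν t =
      (b ν / c ν) * (1 - Real.exp (-(c ν) * t)) * Real.exp (-l * t)
        + e₀ ν * Real.exp (-l * t))
    (e z zint s : ℝ → EuclideanSpace ℝ (Fin 3))
    (hecont : ContinuousOn e (Set.Ici 0))
    (he0 : ∀ ν, e 0 ν = e₀ ν)
    (hz : ∀ t ν, z t ν = e t ν - α ν t)
    (hzint : ∀ t, zint t = ∫ τ in (0:ℝ)..t, z τ)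
    (hs : ∀ t, s t = z t + (show EuclideanSpace ℝ (Fin 3) from WithLp.toLp 2 (Λ.mulVec (zint t))))
    (hode : ∀ t, 0 ≤ t →
      HasDerivAt s (-(show EuclideanSpace ℝ (Fin 3) from WithLp.toLp 2 (K.mulVec (s t))) + Δ t) t) :
    ∀ ν : Fin 3, ∀ t, 0 ≤ t → |e t ν| < ρ ν t :=
  main_theorem_tracking_error_in_envelope_general Λ K hΛdiag hKdiag hΛpos hKpos lamMinΛ lamMaxΛ
    lamMinK hminΛ hmaxΛ hminK δE Δ hΔbound δz hδz l hl ρ₀ ρinf e₀ b c hcpos hδzlt hc ρ α hρ hα e z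
    zint s hecont he0 hz hzint hs hode
end
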